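/- arXiv:1603.02114 — 2 statements merged into one kernel-verified Lean document; each statement's English description precedes it below -/
import Mathlib

section
/- Removing the bottom row of a primitive (n,k) p-fountain yields an (n-k, k-p) p-fountain, and this is a bijection; hence g(n,k) = f(n-k, k-p) for n >= k and k >= p, and consequently G(q,z) = (qz)^p F(q, qz) as formal power series. -/
/-!
For `p ≥ 1` every nonempty row of a `p`-fountain is at least `p` coins shorter than the row
below it (the `p` positions right of its last coin are occupied below), so all rows from
row `width` on are empty and `coins` really counts every coin. Hence deleting the bottom row
of a primitive fountain (whose full second row becomes a valid bottom row), and conversely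
putting a full row of `width + p` coins under an arbitrary fountain, are mutually inverse and
shift `(coins, width)` by `(width, p)`. The identity of generating functions is the
coefficientwise form of `g(n, k) = f(n - k, k - p)`, together with `g(n, k) = 0` outside
`p ≤ k ≤ n`.
-/

/-- A `p`-fountain: an arrangement of coins in rows. `rows i` is the set of positions of
coins in row `i` (row `0` is the bottom row). The bottom row consists of consecutive coins,
and each coin in a higher row has exactly `p+1` descendant coins immediately below it
(so two horizontally adjacent coins share exactly `p` common descendants). -/
structure Fountain (p : ℕ) where
  rows : ℕ → Finset ℕ
  bottom_consecutive : rows 0 = Finset.range (rows 0).card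
  supported : ∀ i j, j ∈ rows (i + 1) → ∀ d ≤ p, j + d ∈ rows i

namespace Fountain
variable {p : ℕ}

/-- The length of the bottom row. -/
def width (F : Fountain p) : ℕ := (F.rows 0).card

/-- The total number of coins. (For `p ≥ 1` all rows above row `width` are empty.) -/
def coins (F : Fountain p) : ℕ := ∑ i ∈ Finset.range (F.width + 1), (F.rows i).card

/-- A fountain is primitive if its next-to-bottom row is full, i.e. has `width - p` coins
(in particular this requires `width ≥ p`). -/
def Primitive (F : Fountain p) : Prop :=
  p ≤ F.width ∧ F.rows 1 = Finset.range (F.width - p)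

end Fountain

/-- `fcount p n k` = number of `(n,k)` `p`-fountains. -/
noncomputable def fcount (p n k : ℕ) : ℕ :=
  Set.ncard {F : Fountain p | F.coins = n ∧ F.width = k}

/-- `gcount p n k` = number of primitive `(n,k)` `p`-fountains. -/
noncomputable def gcount (p n k : ℕ) : ℕ :=
  Set.ncard {F : Fountain p | F.Primitive ∧ F.coins = n ∧ F.width = k}

/-- `hcount p n k` = number of non-primitive `(n,k)` `p`-fountains. -/
noncomputable def hcount (p n k : ℕ) : ℕ :=
  Set.ncard {F : Fountain p | ¬ F.Primitive ∧ F.coins = n ∧ F.width = k}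

/-- The generating function `F(q,z) = ∑ f(n,k) qⁿ zᵏ`, where `q = X 0`, `z = X 1`. -/
noncomputable def Fgf (p : ℕ) : MvPowerSeries (Fin 2) ℚ :=
  fun d => (fcount p (d 0) (d 1) : ℚ)

/-- The generating function `G(q,z) = ∑ g(n,k) qⁿ zᵏ` of primitive fountains. -/
noncomputable def Ggf (p : ℕ) : MvPowerSeries (Fin 2) ℚ :=
  fun d => (gcount p (d 0) (d 1) : ℚ)

/-- The generating function `H(q,z) = ∑ h(n,k) qⁿ zᵏ` of non-primitive fountains. -/
noncomputable def Hgf (p : ℕ) : MvPowerSeries (Fin 2) ℚ :=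
  fun d => (hcount p (d 0) (d 1) : ℚ)

/-- The substituted series `F(q, qz) = ∑ f(n,k) q^{n+k} z^k`. -/
noncomputable def Fqz (p : ℕ) : MvPowerSeries (Fin 2) ℚ :=
  fun d => if d 1 ≤ d 0 then (fcount p (d 0 - d 1) (d 1) : ℚ) else 0


namespace Fountain
variable {p : ℕ}

theorem rows_injective : Function.Injective (rows : Fountain p → ℕ → Finset ℕ) := by
  rintro ⟨_, _, _⟩ ⟨_, _, _⟩ rfl
  rfl

theorem rows_succ_subset (F : Fountain p) (i : ℕ) : F.rows (i + 1) ⊆ F.rows i :=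
  fun j hj => F.supported i j hj 0 p.zero_le

theorem card_rows_succ_add_le (F : Fountain p) (i : ℕ) (h : (F.rows (i + 1)).Nonempty) :
    (F.rows (i + 1)).card + p ≤ (F.rows i).card := by
  set m := (F.rows (i + 1)).max' h
  have hdisj : Disjoint (F.rows (i + 1)) (Finset.Ioc m (m + p)) :=
    Finset.disjoint_right.2 fun x hx hx' =>
      (Finset.mem_Ioc.1 hx).1.not_ge ((F.rows (i + 1)).le_max' x hx')
  have hright : Finset.Ioc m (m + p) ⊆ F.rows i := by
    intro x hx
    obtain ⟨hmx, hxp⟩ := Finset.mem_Ioc.1 hx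
    simpa [Nat.add_sub_cancel' hmx.le] using
      F.supported i m ((F.rows (i + 1)).max'_mem h) (x - m) (by omega)
  calc (F.rows (i + 1)).card + p = (F.rows (i + 1) ∪ Finset.Ioc m (m + p)).card := by
        rw [Finset.card_union_of_disjoint hdisj, Nat.card_Ioc, Nat.add_sub_cancel_left]
    _ ≤ (F.rows i).card :=
        Finset.card_le_card (Finset.union_subset (F.rows_succ_subset i) hright)

theorem card_rows_add_mul_le_width (F : Fountain p) (i : ℕ) (h : (F.rows i).Nonempty) :
    (F.rows i).card + i * p ≤ F.width := by
  induction i with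
  | zero => simp [width]
  | succ i ih =>
    have hstep := F.card_rows_succ_add_le i h
    have hbelow := ih (h.mono (F.rows_succ_subset i))
    linarith [add_one_mul i p]

theorem rows_eq_empty_of_width_le (F : Fountain p) (hp : 1 ≤ p) {i : ℕ} (hi : F.width ≤ i) :
    F.rows i = ∅ := by
  by_contra h
  have hne := Finset.nonempty_iff_ne_empty.2 h
  have hbound := F.card_rows_add_mul_le_width i hne
  have hcard := hne.card_pos
  nlinarith

theorem coins_eq_sum_range (F : Fountain p) (hp : 1 ≤ p) {N : ℕ} (hN : F.width ≤ N) :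
    F.coins = ∑ i ∈ Finset.range (N + 1), (F.rows i).card := by
  refine Finset.sum_subset (Finset.range_subset_range.2 (by omega)) fun i _ hi => ?_
  rw [F.rows_eq_empty_of_width_le hp (by simp only [Finset.mem_range, not_lt] at hi; omega),
    Finset.card_empty]

theorem width_le_coins (F : Fountain p) : F.width ≤ F.coins :=
  Finset.single_le_sum (f := fun i => (F.rows i).card) (fun _ _ => Nat.zero_le _)
    (Finset.mem_range.2 F.width.succ_pos)

def removeBottomRow (F : Fountain p) (hF : F.Primitive) : Fountain p where
  rows i := F.rows (i + 1)
  bottom_consecutive := by rw [hF.2, Finset.card_range]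
  supported i := F.supported (i + 1)

def addBottomRow (F : Fountain p) : Fountain p where
  rows
    | 0 => Finset.range (F.width + p)
    | i + 1 => F.rows i
  bottom_consecutive := by rw [Finset.card_range]
  supported
    | 0, j, hj, d, hd => by
      change j ∈ F.rows 0 at hj
      rw [F.bottom_consecutive, Finset.mem_range] at hj
      exact Finset.mem_range.2 (by unfold width; omega)
    | i + 1, j, hj, d, hd => F.supported i j hj d hd

theorem width_removeBottomRow (F : Fountain p) (hF : F.Primitive) :
    (F.removeBottomRow hF).width = F.width - p :=
  (congrArg Finset.card hF.2).trans (Finset.card_range _)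

theorem width_addBottomRow (F : Fountain p) : F.addBottomRow.width = F.width + p :=
  Finset.card_range _

theorem primitive_addBottomRow (F : Fountain p) : F.addBottomRow.Primitive := by
  refine ⟨by rw [width_addBottomRow]; omega, ?_⟩
  rw [width_addBottomRow, Nat.add_sub_cancel]
  exact F.bottom_consecutive

theorem coins_eq_width_add_coins_removeBottomRow (F : Fountain p) (hp : 1 ≤ p)
    (hF : F.Primitive) : F.coins = F.width + (F.removeBottomRow hF).coins := by
  have hwidth := F.width_removeBottomRow hF
  rw [(F.removeBottomRow hF).coins_eq_sum_range hp (N := F.width - 1) (by omega),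
    Nat.sub_add_cancel (hp.trans hF.1), coins, Finset.sum_range_succ', add_comm]
  rfl

theorem coins_addBottomRow (F : Fountain p) (hp : 1 ≤ p) :
    F.addBottomRow.coins = F.coins + (F.width + p) := by
  rw [F.coins_eq_sum_range hp (N := F.width + p - 1) (by omega), Nat.sub_add_cancel (by omega),
    coins, width_addBottomRow, Finset.sum_range_succ']
  congr 1
  exact Finset.card_range _

theorem removeBottomRow_addBottomRow (F : Fountain p) :
    F.addBottomRow.removeBottomRow F.primitive_addBottomRow = F :=
  rows_injective rfl

theorem addBottomRow_removeBottomRow (F : Fountain p) (hF : F.Primitive) :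
    (F.removeBottomRow hF).addBottomRow = F := by
  refine rows_injective (funext fun i => ?_)
  cases i with
  | zero =>
    show Finset.range ((F.removeBottomRow hF).width + p) = F.rows 0
    rw [width_removeBottomRow, Nat.sub_add_cancel hF.1, F.bottom_consecutive]
    rfl
  | succ i => rfl

def primitiveEquiv (hp : 1 ≤ p) {n k : ℕ} (hk : p ≤ k) (hn : k ≤ n) :
    {F : Fountain p // F.Primitive ∧ F.coins = n ∧ F.width = k} ≃
      {F : Fountain p // F.coins = n - k ∧ F.width = k - p} where
  toFun F := ⟨F.1.removeBottomRow F.2.1, by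
    obtain ⟨hF, hc, hw⟩ := F.2
    have hcoins := F.1.coins_eq_width_add_coins_removeBottomRow hp hF
    exact ⟨by omega, by rw [width_removeBottomRow, hw]⟩⟩
  invFun F := ⟨F.1.addBottomRow, by
    obtain ⟨hc, hw⟩ := F.2
    refine ⟨F.1.primitive_addBottomRow, ?_, ?_⟩
    · rw [F.1.coins_addBottomRow hp, hc, hw]; omega
    · rw [F.1.width_addBottomRow, hw]; omega⟩
  left_inv F := Subtype.ext (F.1.addBottomRow_removeBottomRow F.2.1)
  right_inv F := Subtype.ext F.1.removeBottomRow_addBottomRow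

end Fountain

theorem gcount_eq_fcount {p n k : ℕ} (hp : 1 ≤ p) (hk : p ≤ k) (hn : k ≤ n) :
    gcount p n k = fcount p (n - k) (k - p) := by
  rw [gcount, fcount, ← Nat.card_coe_set_eq, ← Nat.card_coe_set_eq]
  exact Nat.card_congr (Fountain.primitiveEquiv hp hk hn)

theorem gcount_eq_zero {p n k : ℕ} (h : ¬(p ≤ k ∧ k ≤ n)) : gcount p n k = 0 := by
  refine (congrArg Set.ncard (Set.eq_empty_of_forall_notMem ?_)).trans (Set.ncard_empty _)
  rintro F ⟨hF, rfl, rfl⟩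
  exact h ⟨hF.1, F.width_le_coins⟩

open MvPowerSeries in
theorem coeff_X_mul_X_pow_mul {R : Type*} [CommSemiring R] (p : ℕ) (φ : MvPowerSeries (Fin 2) R)
    (d : Fin 2 →₀ ℕ) :
    coeff d ((X 0 * X 1) ^ p * φ) =
      if p ≤ d 0 ∧ p ≤ d 1 then coeff (d - (Finsupp.single 0 p + Finsupp.single 1 p)) φ
      else 0 := by
  rw [mul_pow, X_pow_eq, X_pow_eq, monomial_mul_monomial, one_mul, coeff_monomial_mul, one_mul]
  simp [Finsupp.le_def, Fin.forall_fin_two]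

open MvPowerSeries in
/-- Removing the bottom row of a primitive `(n,k)` `p`-fountain yields an `(n-k, k-p)`
`p`-fountain, and this is a bijection; hence `g(n,k) = f(n-k,k-p)` for `n ≥ k ≥ p`, and
`G(q,z) = (qz)^p F(q,qz)` as formal power series (here `Fqz p` is the substituted series
`F(q,qz)`). -/
theorem primitive_remove_bottom_row (p : ℕ) (hp : 1 ≤ p) :
    (∀ n k, p ≤ k → k ≤ n →
      Nonempty ({F : Fountain p // F.Primitive ∧ F.coins = n ∧ F.width = k} ≃
        {F : Fountain p // F.coins = n - k ∧ F.width = k - p})) ∧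
    (∀ n k, p ≤ k → k ≤ n → gcount p n k = fcount p (n - k) (k - p)) ∧
    Ggf p = (X 0 * X 1) ^ p * Fqz p := by
  refine ⟨fun n k hk hn => ⟨Fountain.primitiveEquiv hp hk hn⟩,
    fun n k hk hn => gcount_eq_fcount hp hk hn, ?_⟩
  ext d
  have hshift :
      ∀ i, (d - (Finsupp.single 0 p + Finsupp.single 1 p) : Fin 2 →₀ ℕ) i = d i - p := by
    simp [Fin.forall_fin_two]
  rw [coeff_X_mul_X_pow_mul]
  simp only [Ggf, Fqz, coeff_apply, hshift]
  by_cases h : p ≤ d 1 ∧ d 1 ≤ d 0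
  · rw [gcount_eq_fcount hp h.1 h.2, if_pos (by omega), if_pos (by omega),
      show d 0 - p - (d 1 - p) = d 0 - d 1 by omega]
  · rw [gcount_eq_zero h, Nat.cast_zero]
    split_ifs <;> first | rfl | omega
end

section
/- The Jacobi triple product identity holds: prod_{n>=1} (1 + z q^n)(1 + z^{-1} q^{n-1})(1 - q^n) = sum_{j=-infinity}^{infinity} z^j q^{binom(j+1,2)}, as an identity of formal Laurent series (or of convergent series for |q|<1, z ≠ 0). -/
/-!
Expanding the finite product `∏_{n<N} (1 + z qⁿ⁺¹)(1 + z⁻¹ qⁿ)` with the q-binomial theorem,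
applied to `x = z q^(1-N)` and the `2N` factors `1 + x qⁱ`, gives
`∑_{|j| ≤ N} [2N, N+j]_q zʲ q^(j(j+1)/2)`. After multiplying by `(q;q)_N = ∏_{n<N} (1 - qⁿ⁺¹)`,
the coefficient of `zʲ q^(j(j+1)/2)` is `(q;q)_N (q;q)_{2N} / ((q;q)_{N+j} (q;q)_{N-j})`. Since
`(q;q)_m` converges to a nonzero limit, these coefficients tend to `1` and are bounded uniformly
in `N` and `j`, so Tannery's theorem lets the sum pass to the limit termwise. The case `q = 0`,
where `q^(1-N)` is unavailable, is checked directly.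
-/

open Finset Filter Topology

namespace JacobiTripleProduct

def triangle (j : ℤ) : ℕ := (j * (j + 1) / 2).toNat

lemma two_mul_triangle (j : ℤ) : 2 * (triangle j : ℤ) = j * (j + 1) := by
  have h_nonneg : 0 ≤ j * (j + 1) := by rcases le_or_gt 0 j with h | h <;> nlinarith
  rw [triangle, Int.toNat_of_nonneg (Int.ediv_nonneg h_nonneg zero_le_two),
    Int.mul_ediv_cancel' (Int.even_mul_succ_self j).two_dvd]

lemma choose_two_succ (n : ℕ) : (n + 1).choose 2 = n.choose 2 + n := by
  rw [Nat.choose_succ_succ' n 1, Nat.choose_one_right, add_comm]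

lemma two_mul_choose_two (n : ℕ) : 2 * (n.choose 2 : ℤ) = n * (n - 1) := by
  induction n with
  | zero => simp
  | succ n ih =>
    rw [choose_two_succ]
    push_cast
    linarith

lemma triangle_natCast (n : ℕ) : triangle n = (n + 1).choose 2 := by
  have h := two_mul_triangle n
  have h' := two_mul_choose_two (n + 1)
  push_cast at h'
  have : (triangle n : ℤ) = ((n + 1).choose 2 : ℕ) := by linarith
  exact_mod_cast this

lemma triangle_neg_add_one (n : ℕ) : triangle (-(n + 1)) = (n + 1).choose 2 := by
  have h := two_mul_triangle (-(n + 1))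
  have h' := two_mul_choose_two (n + 1)
  push_cast at h'
  have : (triangle (-(n + 1)) : ℤ) = ((n + 1).choose 2 : ℕ) := by linarith
  exact_mod_cast this

lemma triangle_eq_zero_iff {j : ℤ} : triangle j = 0 ↔ j = 0 ∨ j = -1 := by
  rw [← Nat.cast_eq_zero (R := ℤ), ← mul_eq_zero_iff_left two_ne_zero, two_mul_triangle,
    mul_eq_zero, add_eq_zero_iff_eq_neg]

lemma tsum_int_ite_eq_tsum_nat {α : Type*} [AddCommMonoid α] [TopologicalSpace α] (f : ℤ → α)
    (N : ℕ) : ∑' j : ℤ, (if -(N : ℤ) ≤ j then f j else 0) = ∑' k : ℕ, f (k - N) := by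
  have h_inj : Function.Injective fun k : ℕ => (k : ℤ) - N := fun a b h => by simpa using h
  rw [← h_inj.tsum_eq]
  · exact tsum_congr fun k => if_pos (by omega)
  · intro j hj
    have : -(N : ℤ) ≤ j := by_contra fun h => hj (if_neg h)
    exact ⟨(j + N).toNat, by simp only; omega⟩

section Field

variable {K : Type*} [Field K]

def qPochhammer (q : K) (m : ℕ) : K := ∏ i ∈ range m, (1 - q ^ (i + 1))

def gaussBinom (q : K) (m k : ℕ) : K :=
  if k ≤ m then qPochhammer q m / (qPochhammer q k * qPochhammer q (m - k)) else 0

def thetaTerm (z q : K) (j : ℤ) : K := z ^ j * q ^ triangle j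

variable {q z : K}

@[simp]
lemma qPochhammer_zero : qPochhammer q 0 = 1 :=
  prod_range_zero _

lemma qPochhammer_succ (m : ℕ) :
    qPochhammer q (m + 1) = qPochhammer q m * (1 - q ^ (m + 1)) :=
  prod_range_succ _ _

lemma qPochhammer_ne_zero (hq : ∀ n, q ^ (n + 1) ≠ 1) (m : ℕ) : qPochhammer q m ≠ 0 :=
  prod_ne_zero_iff.mpr fun i _ => sub_ne_zero.mpr (hq i).symm

lemma gaussBinom_of_lt {m k : ℕ} (h : m < k) : gaussBinom q m k = 0 :=
  if_neg h.not_ge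

lemma gaussBinom_zero_right (hq : ∀ n, q ^ (n + 1) ≠ 1) (m : ℕ) : gaussBinom q m 0 = 1 := by
  simp [gaussBinom, qPochhammer_ne_zero hq]

lemma gaussBinom_self (hq : ∀ n, q ^ (n + 1) ≠ 1) (m : ℕ) : gaussBinom q m m = 1 := by
  simp [gaussBinom, qPochhammer_ne_zero hq]

lemma gaussBinom_succ_succ (hq : ∀ n, q ^ (n + 1) ≠ 1) (m k : ℕ) :
    gaussBinom q (m + 1) (k + 1) = gaussBinom q m (k + 1) + q ^ (m - k) * gaussBinom q m k := by
  rcases lt_trichotomy k m with hk | rfl | hk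
  · obtain ⟨r, rfl⟩ := Nat.exists_eq_add_of_lt hk
    have hD := qPochhammer_ne_zero hq
    simp only [gaussBinom, if_pos (by omega : k + 1 ≤ k + r + 1 + 1),
      if_pos (by omega : k + 1 ≤ k + r + 1), if_pos (by omega : k ≤ k + r + 1),
      (by omega : k + r + 1 + 1 - (k + 1) = r + 1), (by omega : k + r + 1 - (k + 1) = r),
      (by omega : k + r + 1 - k = r + 1), qPochhammer_succ]
    field_simp [hD, sub_ne_zero.mpr (hq k).symm, sub_ne_zero.mpr (hq r).symm]
    ring
  · rw [gaussBinom_self hq, gaussBinom_of_lt (lt_add_one k), gaussBinom_self hq]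
    simp
  · rw [gaussBinom_of_lt (by omega), gaussBinom_of_lt (by omega), gaussBinom_of_lt hk]
    simp

theorem prod_one_add_mul_pow_eq_sum_gaussBinom (hq : ∀ n, q ^ (n + 1) ≠ 1) (x : K) (m : ℕ) :
    ∏ i ∈ range m, (1 + x * q ^ i) =
      ∑ k ∈ range (m + 1), gaussBinom q m k * q ^ k.choose 2 * x ^ k := by
  induction m with
  | zero => simp [gaussBinom_zero_right hq]
  | succ m ih =>
    set S := ∑ k ∈ range (m + 1), gaussBinom q m k * q ^ k.choose 2 * x ^ k
    have h_shift : ∑ k ∈ range (m + 1),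
        q ^ (m - k) * gaussBinom q m k * q ^ (k + 1).choose 2 * x ^ (k + 1) = x * q ^ m * S := by
      rw [mul_sum]
      refine sum_congr rfl fun k hk => ?_
      have h_exp : m - k + (k + 1).choose 2 = m + k.choose 2 := by
        rw [choose_two_succ]
        have := mem_range.mp hk
        omega
      calc _ = gaussBinom q m k * q ^ (m - k + (k + 1).choose 2) * x ^ (k + 1) := by ring
        _ = _ := by rw [h_exp]; ring
    have h_same : ∑ k ∈ range (m + 1),
        gaussBinom q m (k + 1) * q ^ (k + 1).choose 2 * x ^ (k + 1) + 1 = S := by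
      have h_last : gaussBinom q m (m + 1) * q ^ (m + 1).choose 2 * x ^ (m + 1) = 0 := by
        rw [gaussBinom_of_lt (lt_add_one m), zero_mul, zero_mul]
      rw [← add_zero S, ← h_last, ← sum_range_succ, sum_range_succ' _ (m + 1)]
      simp [gaussBinom_zero_right hq]
    rw [prod_range_succ, ih, sum_range_succ']
    simp only [gaussBinom_succ_succ hq, add_mul, sum_add_distrib, h_shift,
      gaussBinom_zero_right hq, Nat.choose_zero_succ, pow_zero, one_mul]
    linear_combination -h_same

lemma prod_one_add_inv_mul_pow (hz : z ≠ 0) (hq0 : q ≠ 0) (N : ℕ) :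
    ∏ n ∈ range N, (1 + z⁻¹ * q ^ n) =
      z⁻¹ ^ N * q ^ N.choose 2 * ∏ n ∈ range N, (1 + z * (q ^ n)⁻¹) := by
  have h_factor (n : ℕ) : 1 + z⁻¹ * q ^ n = z⁻¹ * q ^ n * (1 + z * (q ^ n)⁻¹) := by
    field_simp
    ring
  rw [prod_congr rfl fun n _ => h_factor n, prod_mul_distrib, prod_mul_distrib, prod_const,
    card_range, prod_pow_eq_pow_sum, sum_range_id, Nat.choose_two_right]

lemma prod_range_two_mul_one_add_mul_pow (hq0 : q ≠ 0) (z : K) (N : ℕ) :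
    ∏ i ∈ range (2 * N), (1 + z * q ^ (1 - (N : ℤ)) * q ^ i) =
      (∏ n ∈ range N, (1 + z * q ^ (n + 1))) * ∏ n ∈ range N, (1 + z * (q ^ n)⁻¹) := by
  rw [two_mul, prod_range_add, mul_comm]
  congr 1
  · refine prod_congr rfl fun n _ => ?_
    rw [mul_assoc, ← zpow_natCast, ← zpow_natCast, ← zpow_add₀ hq0]
    congr 3
    push_cast
    ring
  · rw [← prod_range_reflect]
    refine prod_congr rfl fun n hn => ?_
    have := mem_range.mp hn
    rw [mul_assoc, ← zpow_natCast, ← zpow_natCast, ← zpow_neg, ← zpow_add₀ hq0]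
    congr 3
    omega

lemma thetaTerm_sub_natCast (hz : z ≠ 0) (hq0 : q ≠ 0) (N k : ℕ) :
    thetaTerm z q (k - N) =
      z⁻¹ ^ N * q ^ N.choose 2 * (q ^ k.choose 2 * (z * q ^ (1 - (N : ℤ))) ^ k) := by
  have h_exp : (N.choose 2 : ℤ) + k.choose 2 + (1 - N) * k = triangle (k - N) := by
    have := two_mul_triangle (k - N)
    have := two_mul_choose_two N
    have := two_mul_choose_two k
    linarith
  rw [thetaTerm, ← zpow_natCast q (triangle _), ← h_exp, zpow_sub₀ hz, zpow_add₀ hq0,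
    zpow_add₀ hq0, mul_pow, ← zpow_natCast (q ^ _), ← zpow_mul, zpow_natCast, zpow_natCast,
    zpow_natCast, zpow_natCast, inv_pow]
  ring

theorem prod_range_eq_sum_gaussBinom_mul_thetaTerm (hq : ∀ n, q ^ (n + 1) ≠ 1) (hq0 : q ≠ 0)
    (hz : z ≠ 0) (N : ℕ) :
    ∏ n ∈ range N, ((1 + z * q ^ (n + 1)) * (1 + z⁻¹ * q ^ n)) =
      ∑ k ∈ range (2 * N + 1), gaussBinom q (2 * N) k * thetaTerm z q (k - N) := by
  rw [prod_mul_distrib, prod_one_add_inv_mul_pow hz hq0, mul_left_comm,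
    ← prod_range_two_mul_one_add_mul_pow hq0, prod_one_add_mul_pow_eq_sum_gaussBinom hq, mul_sum]
  refine sum_congr rfl fun k _ => ?_
  rw [thetaTerm_sub_natCast hz hq0]
  ring

lemma tsum_thetaTerm_zero [TopologicalSpace K] (z : K) : ∑' j, thetaTerm z 0 j = 1 + z⁻¹ := by
  rw [tsum_eq_sum (s := {0, -1}) fun j hj => ?_, sum_pair (by norm_num)]
  · simp [thetaTerm, triangle]
  · simp only [mem_insert, mem_singleton, not_or] at hj
    rw [thetaTerm, zero_pow (mt triangle_eq_zero_iff.mp (by tauto)), mul_zero]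

end Field

section NormedField

variable {𝕜 : Type*} [NormedField 𝕜] {q : 𝕜}

lemma pow_succ_ne_one_of_norm_lt_one (hq : ‖q‖ < 1) (n : ℕ) : q ^ (n + 1) ≠ 1 := fun h => by
  have := pow_lt_one₀ (norm_nonneg q) hq n.succ_ne_zero
  rw [← norm_pow, h, norm_one] at this
  exact this.false

lemma summable_norm_pow_mul_pow_choose_two (hq : ‖q‖ < 1) (y : 𝕜) :
    Summable fun n : ℕ => ‖y ^ n * q ^ n.choose 2‖ := by
  have h_small : Tendsto (fun n : ℕ => ‖y‖ * ‖q‖ ^ n) atTop (𝓝 0) := by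
    simpa using (tendsto_pow_atTop_nhds_zero_of_lt_one (norm_nonneg q) hq).const_mul ‖y‖
  refine summable_of_ratio_norm_eventually_le one_half_lt_one ?_
  filter_upwards [h_small.eventually_le_const one_half_pos] with n hn
  rw [norm_norm, norm_norm]
  calc ‖y ^ (n + 1) * q ^ (n + 1).choose 2‖ = ‖y‖ * ‖q‖ ^ n * ‖y ^ n * q ^ n.choose 2‖ := by
        rw [choose_two_succ]
        simp only [norm_mul, norm_pow]
        ring
    _ ≤ 1 / 2 * ‖y ^ n * q ^ n.choose 2‖ := by gcongr

lemma summable_norm_thetaTerm (hq : ‖q‖ < 1) (z : 𝕜) : Summable fun j => ‖thetaTerm z q j‖ := by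
  refine .of_nat_of_neg_add_one
    ((summable_norm_pow_mul_pow_choose_two hq (z * q)).congr fun n => ?_)
    (((summable_nat_add_iff 1).mpr (summable_norm_pow_mul_pow_choose_two hq z⁻¹)).congr
      fun n => ?_)
  · rw [thetaTerm, triangle_natCast, choose_two_succ, zpow_natCast, mul_pow, pow_add]
    ring_nf
  · rw [thetaTerm, triangle_neg_add_one, zpow_neg, ← inv_zpow, ← Nat.cast_succ, zpow_natCast]

variable [CompleteSpace 𝕜]

lemma multipliable_one_add_mul_pow (hq : ‖q‖ < 1) (c : 𝕜) :
    Multipliable fun n : ℕ => 1 + c * q ^ n :=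
  multipliable_one_add_of_summable (by
    simpa [norm_mul, norm_pow] using (summable_geometric_of_lt_one (norm_nonneg q) hq).mul_left ‖c‖)

lemma tendsto_qPochhammer (hq : ‖q‖ < 1) :
    Tendsto (qPochhammer q) atTop (𝓝 (∏' n : ℕ, (1 - q ^ (n + 1)))) :=
  ((multipliable_one_add_mul_pow hq (-q)).congr fun n => by ring).tendsto_prod_tprod_nat

lemma tprod_one_sub_pow_ne_zero (hq : ‖q‖ < 1) : ∏' n : ℕ, (1 - q ^ (n + 1)) ≠ 0 := by
  simpa [sub_eq_add_neg] using tprod_one_add_ne_zero_of_summable (f := fun n => -q ^ (n + 1))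
    (fun n => by simpa [← sub_eq_add_neg, sub_eq_zero] using
      (pow_succ_ne_one_of_norm_lt_one hq n).symm)
    (by simpa using
      (summable_nat_add_iff 1).mpr (summable_geometric_of_lt_one (norm_nonneg q) hq))

lemma exists_norm_qPochhammer_mul_gaussBinom_le (hq : ‖q‖ < 1) :
    ∃ B, ∀ n m k, ‖qPochhammer q n * gaussBinom q m k‖ ≤ B := by
  obtain ⟨C, hC⟩ := isBounded_iff_forall_norm_le.mp
    (Metric.isBounded_range_of_tendsto _ (tendsto_qPochhammer hq))
  obtain ⟨C', hC'⟩ := isBounded_iff_forall_norm_le.mp (Metric.isBounded_range_of_tendsto _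
    ((tendsto_qPochhammer hq).inv₀ (tprod_one_sub_pow_ne_zero hq)))
  simp only [Set.forall_mem_range] at hC hC'
  have hC0 : 0 ≤ C := (norm_nonneg _).trans (hC 0)
  have hC'0 : 0 ≤ C' := (norm_nonneg _).trans (hC' 0)
  refine ⟨C * C * (C' * C'), fun n m k => ?_⟩
  by_cases hkm : k ≤ m
  · rw [gaussBinom, if_pos hkm, div_eq_mul_inv, mul_inv, ← mul_assoc, norm_mul, norm_mul,
      norm_mul]
    gcongr
    exacts [hC n, hC m, hC' k, hC' (m - k)]
  · rw [gaussBinom_of_lt (not_le.mp hkm), mul_zero, norm_zero]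
    positivity

lemma tendsto_qPochhammer_mul_gaussBinom (hq : ‖q‖ < 1) (j : ℤ) :
    Tendsto (fun N : ℕ => qPochhammer q N * gaussBinom q (2 * N) (N + j).toNat) atTop (𝓝 1) := by
  set L := ∏' n : ℕ, (1 - q ^ (n + 1))
  have hL : L * L ≠ 0 := mul_ne_zero (tprod_one_sub_pow_ne_zero hq) (tprod_one_sub_pow_ne_zero hq)
  have h_shift (c : ℕ → ℕ) (hc : ∀ b, ∃ N₀, ∀ N ≥ N₀, b ≤ c N) :
      Tendsto (fun N => qPochhammer q (c N)) atTop (𝓝 L) :=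
    (tendsto_qPochhammer hq).comp (tendsto_atTop_atTop.mpr hc)
  have h_lim := ((h_shift id fun b => ⟨b, fun _ => id⟩).mul
    (h_shift (2 * ·) fun b => ⟨b, fun N hN => by omega⟩)).div
    ((h_shift (fun N => (N + j).toNat) fun b => ⟨b + j.natAbs, fun N hN => by omega⟩).mul
      (h_shift (fun N => (N - j).toNat) fun b => ⟨b + j.natAbs, fun N hN => by omega⟩)) hL
  rw [div_self hL] at h_lim
  refine h_lim.congr' ?_
  filter_upwards [eventually_ge_atTop j.natAbs] with N hN
  simp only [Pi.div_apply, id]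
  rw [gaussBinom, if_pos (by omega), (by omega : 2 * N - (N + j).toNat = (N - j).toNat),
    mul_div_assoc]

theorem tendsto_prod_range_jacobi (hq : ‖q‖ < 1) (hq0 : q ≠ 0) {z : 𝕜} (hz : z ≠ 0) :
    Tendsto (fun N => ∏ n ∈ range N,
      ((1 + z * q ^ (n + 1)) * (1 + z⁻¹ * q ^ n) * (1 - q ^ (n + 1))))
      atTop (𝓝 (∑' j, thetaTerm z q j)) := by
  have h_partial (N : ℕ) : ∏ n ∈ range N,
      ((1 + z * q ^ (n + 1)) * (1 + z⁻¹ * q ^ n) * (1 - q ^ (n + 1))) =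
      ∑' j : ℤ, if -(N : ℤ) ≤ j then
        qPochhammer q N * gaussBinom q (2 * N) (N + j).toNat * thetaTerm z q j else 0 := by
    rw [prod_mul_distrib, prod_range_eq_sum_gaussBinom_mul_thetaTerm
      (pow_succ_ne_one_of_norm_lt_one hq) hq0 hz, tsum_int_ite_eq_tsum_nat,
      tsum_eq_sum (s := range (2 * N + 1)) fun k hk => ?_, mul_comm, mul_sum]
    · refine sum_congr rfl fun k _ => ?_
      simp only [add_sub_cancel, Int.toNat_natCast, qPochhammer]
      ring
    · rw [gaussBinom_of_lt (by simpa using hk), mul_zero, zero_mul]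
  obtain ⟨B, hB⟩ := exists_norm_qPochhammer_mul_gaussBinom_le hq
  simp_rw [h_partial]
  refine tendsto_tsum_of_dominated_convergence ((summable_norm_thetaTerm hq z).mul_left B)
    (fun j => ?_) (.of_forall fun N j => ?_)
  · have h_lim := (tendsto_qPochhammer_mul_gaussBinom hq j).mul_const (thetaTerm z q j)
    rw [one_mul] at h_lim
    refine h_lim.congr' ?_
    filter_upwards [eventually_ge_atTop j.natAbs] with N hN
    rw [if_pos (by omega)]
  · split_ifs
    · rw [norm_mul]
      exact mul_le_mul_of_nonneg_right (hB _ _ _) (norm_nonneg _)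
    · rw [norm_zero]
      exact mul_nonneg ((norm_nonneg _).trans (hB 0 0 0)) (norm_nonneg _)

end NormedField

end JacobiTripleProduct

open JacobiTripleProduct

/-- The Jacobi triple product identity
`∏_{n≥1} (1 + z qⁿ)(1 + z⁻¹ qⁿ⁻¹)(1 - qⁿ) = ∑_{j∈ℤ} zʲ q^{j(j+1)/2}`,
stated for convergent series: `|q| < 1`, `z ≠ 0`. Note that `j(j+1)/2 ≥ 0` for every
integer `j`, so `q^{j(j+1)/2}` is a natural power. -/
theorem jacobi_triple_product (q z : ℂ) (hq : ‖q‖ < 1) (hz : z ≠ 0) :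
    ∏' n : ℕ, ((1 + z * q ^ (n + 1)) * (1 + z⁻¹ * q ^ n) * (1 - q ^ (n + 1))) =
      ∑' j : ℤ, z ^ j * q ^ (j * (j + 1) / 2).toNat := by
  rcases eq_or_ne q 0 with rfl | hq0
  · refine .trans ?_ (tsum_thetaTerm_zero z).symm
    rw [tprod_eq_mulSingle 0 fun n hn => by simp [hn]]
    simp
  · have h_mult : Multipliable fun n : ℕ =>
        (1 + z * q ^ (n + 1)) * (1 + z⁻¹ * q ^ n) * (1 - q ^ (n + 1)) :=
      (((multipliable_one_add_mul_pow hq (z * q)).mul (multipliable_one_add_mul_pow hq z⁻¹)).mul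
        (multipliable_one_add_mul_pow hq (-q))).congr fun n => by ring
    exact tendsto_nhds_unique h_mult.tendsto_prod_tprod_nat (tendsto_prod_range_jacobi hq hq0 hz)
end
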